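/- Let D ≥ 2, let H be an invertible D×D real matrix, and let Ψ : ℝ^D ∖ {0} → ℝ^D be Ψ(x) = H x / ‖H x‖. For x ∈ S^{D-1}, let J(x) be the Jacobian matrix of Ψ at x. Then for every real D×(D-1) matrix E with EᵀE = I_{D-1} and Eᵀx = 0 (columns forming an orthonormal basis of the tangent space of S^{D-1} at x), one has √(det(Eᵀ J(x)ᵀ J(x) E)) = |det H| · ‖H x‖^{−D}. -/

import Mathlib

open Matrix

/-- The linear-project map `Ψ(x) = H x / ‖H x‖` on ambient `ℝ^D` (Euclidean norm). -/
noncomputable def linProj {D : ℕ} (H : Matrix (Fin D) (Fin D) ℝ)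
    (x : EuclideanSpace ℝ (Fin D)) : EuclideanSpace ℝ (Fin D) :=
  ‖(WithLp.equiv 2 (Fin D → ℝ)).symm (H.mulVec (WithLp.equiv 2 (Fin D → ℝ) x))‖⁻¹ •
    (WithLp.equiv 2 (Fin D → ℝ)).symm (H.mulVec (WithLp.equiv 2 (Fin D → ℝ) x))

/-- The `D×D` Jacobian matrix of a map `Ψ : ℝ^D → ℝ^D` at a point `x`. -/
noncomputable def jacobianMatrix (D : ℕ)
    (Ψ : EuclideanSpace ℝ (Fin D) → EuclideanSpace ℝ (Fin D))
    (x : EuclideanSpace ℝ (Fin D)) : Matrix (Fin D) (Fin D) ℝ :=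
  fun i j => fderiv ℝ Ψ x (EuclideanSpace.single j 1) i

section NormDeriv

variable {F : Type*} [NormedAddCommGroup F] [InnerProductSpace ℝ F]

lemma hasFDerivAt_norm' {y : F} (hy : y ≠ 0) :
    HasFDerivAt (fun z : F => ‖z‖) (‖y‖⁻¹ • innerSL ℝ y) y := by
  have h0 : (0:ℝ) < ‖y‖ := norm_pos_iff.mpr hy
  have h1 : HasFDerivAt (fun z : F => ‖z‖ ^ 2) (2 • (innerSL ℝ y)) y :=
    (hasStrictFDerivAt_norm_sq y).hasFDerivAt
  have h2 : HasDerivAt Real.sqrt (1 / (2 * Real.sqrt (‖y‖^2))) (‖y‖^2) :=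
    Real.hasDerivAt_sqrt (by positivity)
  have h3 := (h2.comp_hasFDerivAt y h1)
  have e1 : (Real.sqrt ∘ fun z : F => ‖z‖^2) = fun z : F => ‖z‖ := by
    ext z; simp [Real.sqrt_sq (norm_nonneg z)]
  rw [e1] at h3
  refine h3.congr_fderiv ?_
  rw [Real.sqrt_sq h0.le]
  ext v
  simp [two_smul]
  field_simp
  ring

lemma hasFDerivAt_normalize {y : F} (hy : y ≠ 0) :
    HasFDerivAt (fun z : F => ‖z‖⁻¹ • z)
      (‖y‖⁻¹ • ContinuousLinearMap.id ℝ F +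
        ((-(‖y‖^3)⁻¹) • innerSL ℝ y).smulRight y) y := by
  have h0 : (0:ℝ) < ‖y‖ := norm_pos_iff.mpr hy
  have hc : HasFDerivAt (fun z : F => ‖z‖⁻¹) ((-(‖y‖^3)⁻¹) • innerSL ℝ y) y := by
    have hinv : HasDerivAt (fun t : ℝ => t⁻¹) (-(‖y‖^2)⁻¹) ‖y‖ := hasDerivAt_inv h0.ne'
    have := hinv.comp_hasFDerivAt y (hasFDerivAt_norm' hy)
    have e : (-(‖y‖^2)⁻¹ : ℝ) • (‖y‖⁻¹ • innerSL ℝ y) = (-(‖y‖^3)⁻¹) • innerSL ℝ y := by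
      rw [smul_smul]; congr 1; rw [pow_succ]; field_simp
    rw [e] at this
    exact this
  have h := hc.smul (hasFDerivAt_id y)
  exact h

end NormDeriv

lemma jacobianMatrix_linProj (D : ℕ) (H : Matrix (Fin D) (Fin D) ℝ)
    (x : EuclideanSpace ℝ (Fin D))
    (hy : Matrix.toEuclideanLin H x ≠ 0) :
    jacobianMatrix D (linProj H) x =
      ‖(WithLp.equiv 2 (Fin D → ℝ)).symm (H.mulVec (WithLp.equiv 2 (Fin D → ℝ) x))‖⁻¹ • H -
      (‖(WithLp.equiv 2 (Fin D → ℝ)).symm (H.mulVec (WithLp.equiv 2 (Fin D → ℝ) x))‖^3)⁻¹ •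
        (vecMulVec (H.mulVec (WithLp.equiv 2 (Fin D → ℝ) x))
          (H.mulVec (WithLp.equiv 2 (Fin D → ℝ) x)) * H) := by
  set A : EuclideanSpace ℝ (Fin D) →L[ℝ] EuclideanSpace ℝ (Fin D) :=
    LinearMap.toContinuousLinearMap (Matrix.toEuclideanLin H) with hA
  have hAx : ∀ z, A z = Matrix.toEuclideanLin H z := fun z => rfl
  have hΨ : linProj H = (fun z : EuclideanSpace ℝ (Fin D) => ‖z‖⁻¹ • z) ∘ A := rfl
  set y : EuclideanSpace ℝ (Fin D) := A x with hy'
  have hy0 : y ≠ 0 := hy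
  have hd : HasFDerivAt (linProj H)
      ((‖y‖⁻¹ • ContinuousLinearMap.id ℝ _ +
        ((-(‖y‖^3)⁻¹) • innerSL ℝ y).smulRight y).comp A) x := by
    rw [hΨ]
    exact (hasFDerivAt_normalize hy0).comp x A.hasFDerivAt
  ext i j
  rw [jacobianMatrix, hd.fderiv]
  have hAs : A (EuclideanSpace.single j 1) =
      (WithLp.equiv 2 (Fin D → ℝ)).symm (fun i => H i j) := by
    rw [hAx, Matrix.toEuclideanLin_apply]
    congr 1
    have : (EuclideanSpace.single j 1 : EuclideanSpace ℝ (Fin D)).ofLp = Pi.single j 1 := rfl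
    rw [this, Matrix.mulVec_single]
    simp; rfl
  simp only [ContinuousLinearMap.comp_apply, hAs]
  simp only [ContinuousLinearMap.add_apply, ContinuousLinearMap.smul_apply,
    ContinuousLinearMap.id_apply, ContinuousLinearMap.smulRight_apply, innerSL_apply_apply]
  have hyc : y = (WithLp.equiv 2 (Fin D → ℝ)).symm (H.mulVec (WithLp.equiv 2 (Fin D → ℝ) x)) := rfl
  simp only [PiLp.add_apply, PiLp.smul_apply, smul_eq_mul]
  rw [hyc]
  simp only [WithLp.equiv_symm_apply, PiLp.toLp_apply, PiLp.inner_apply, RCLike.inner_apply, conj_trivial,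
    PiLp.toLp_apply]
  simp only [Matrix.sub_apply, Matrix.smul_apply, Matrix.mul_apply, Matrix.vecMulVec_apply,
    smul_eq_mul]
  rw [sub_eq_add_neg]
  congr 1
  rw [neg_mul, neg_mul, neg_inj, mul_assoc, Finset.sum_mul, Finset.mul_sum, Finset.mul_sum]
  congr 1
  funext k
  ring
lemma vecMulVec_mulVec {D : ℕ} (a b c : Fin D → ℝ) :
    vecMulVec a b *ᵥ c = (b ⬝ᵥ c) • a := by
  funext i
  simp only [Matrix.mulVec, Matrix.vecMulVec_apply, dotProduct, Pi.smul_apply,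
    smul_eq_mul, Finset.sum_mul]
  exact Finset.sum_congr rfl fun k _ => by ring

lemma vecMulVec_transpose {D : ℕ} (a b : Fin D → ℝ) :
    (vecMulVec a b)ᵀ = vecMulVec b a := by
  ext i j; simp [Matrix.vecMulVec_apply, mul_comm]

lemma det_core (D : ℕ) (hD : 2 ≤ D) (H : Matrix (Fin D) (Fin D) ℝ) (hH : IsUnit H.det)
    (xv : Fin D → ℝ) (hxv : xv ⬝ᵥ xv = 1)
    (E : Matrix (Fin D) (Fin (D-1)) ℝ) (hE : Eᵀ * E = 1) (hEx : Eᵀ *ᵥ xv = 0)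
    (r : ℝ) (hr : 0 < r) (hu : (H *ᵥ xv) ⬝ᵥ (H *ᵥ xv) = r ^ 2) :
    (Eᵀ * (r⁻¹ • H - (r^3)⁻¹ • (vecMulVec (H *ᵥ xv) (H *ᵥ xv) * H))ᵀ *
      (r⁻¹ • H - (r^3)⁻¹ • (vecMulVec (H *ᵥ xv) (H *ᵥ xv) * H)) * E).det
    = H.det ^ 2 / r ^ (2 * D) := by
  have hrn : r ≠ 0 := hr.ne'
  set u : Fin D → ℝ := H *ᵥ xv with hudef
  set J : Matrix (Fin D) (Fin D) ℝ := r⁻¹ • H - (r^3)⁻¹ • (vecMulVec u u * H) with hJ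
  set N : Matrix (Fin D) (Fin D) ℝ := J + (r^2)⁻¹ • vecMulVec u xv with hN
  -- row xv * E = 0
  have hvE : xv ᵥ* E = 0 := by rw [← Matrix.mulVec_transpose]; exact hEx
  have hrowE : replicateRow (Fin 1) xv * E = 0 := by rw [← replicateRow_vecMul, hvE, replicateRow_zero]
  have hcolE : Eᵀ * replicateCol (Fin 1) xv = 0 := by rw [← replicateCol_mulVec, hEx, replicateCol_zero]
  have hNE : N * E = J * E := by
    rw [hN, Matrix.add_mul, Matrix.smul_mul, vecMulVec_eq (Fin 1), Matrix.mul_assoc,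
      hrowE, Matrix.mul_zero, smul_zero, add_zero]
  -- determinant of N
  set w : Fin D → ℝ := (r^2)⁻¹ • xv - (r^3)⁻¹ • (u ᵥ* H) with hw
  have hrow_w : replicateRow (Fin 1) w = (r^2)⁻¹ • replicateRow (Fin 1) xv - (r^3)⁻¹ • (replicateRow (Fin 1) u * H) := by
    rw [← replicateRow_vecMul]; ext i j
    simp [hw, Matrix.replicateRow_apply]
  have h1 : H * (replicateCol (Fin 1) (r • xv) * replicateRow (Fin 1) w) = r • (replicateCol (Fin 1) u * replicateRow (Fin 1) w) := by
    rw [← Matrix.mul_assoc, ← replicateCol_mulVec, Matrix.mulVec_smul, replicateCol_smul, Matrix.smul_mul]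
  have h2 : replicateCol (Fin 1) u * replicateRow (Fin 1) w
      = (r^2)⁻¹ • vecMulVec u xv - (r^3)⁻¹ • (vecMulVec u u * H) := by
    erw [hrow_w, Matrix.mul_sub, Matrix.mul_smul, Matrix.mul_smul, ← vecMulVec_eq (Fin 1),
      ← Matrix.mul_assoc, ← vecMulVec_eq (Fin 1)]
  have hfact : N = (r⁻¹ • H) * (1 + replicateCol (Fin 1) (r • xv) * replicateRow (Fin 1) w) := by
    rw [Matrix.mul_add, Matrix.mul_one, Matrix.smul_mul, h1, smul_smul,
      inv_mul_cancel₀ hrn, one_smul, h2, hN, hJ]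
    abel
  have hdet1 : (1 + replicateCol (Fin 1) (r • xv) * replicateRow (Fin 1) w).det = r⁻¹ := by
    erw [det_one_add_replicateCol_mul_replicateRow (ι := Fin 1)]
    have : w ⬝ᵥ (r • xv) = r * (w ⬝ᵥ xv) := by
      rw [dotProduct_smul]; simp [mul_comm]
    rw [this, hw, sub_dotProduct, smul_dotProduct, smul_dotProduct, hxv,
      ← dotProduct_mulVec, ← hudef, hu]
    field_simp
    simp only [smul_eq_mul]
    field_simp
    ring
  have hdetN : N.det = H.det * (r ^ (D+1))⁻¹ := by
    rw [hfact, det_mul, det_smul, hdet1, Fintype.card_fin, inv_pow, pow_succ]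
    field_simp
  -- mulVec facts
  have hvv_u : vecMulVec u u *ᵥ u = (r^2) • u := by rw [_root_.vecMulVec_mulVec, hu]
  have hJx : J *ᵥ xv = 0 := by
    rw [hJ, Matrix.sub_mulVec, Matrix.smul_mulVec, Matrix.smul_mulVec,
      ← Matrix.mulVec_mulVec, ← hudef, hvv_u, smul_smul]
    rw [show (r^3)⁻¹ * r^2 = r⁻¹ by field_simp]
    exact sub_self _
  have hNx : N *ᵥ xv = (r^2)⁻¹ • u := by
    rw [hN, Matrix.add_mulVec, hJx, zero_add, Matrix.smul_mulVec,
      _root_.vecMulVec_mulVec, hxv, one_smul]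
  have hNTu : Nᵀ *ᵥ u = xv := by
    rw [hN, Matrix.transpose_add, Matrix.transpose_smul, vecMulVec_transpose,
      Matrix.add_mulVec, Matrix.smul_mulVec, _root_.vecMulVec_mulVec, hu]
    have hJTu : Jᵀ *ᵥ u = 0 := by
      rw [hJ, Matrix.transpose_sub, Matrix.transpose_smul, Matrix.transpose_smul,
        Matrix.transpose_mul, vecMulVec_transpose, Matrix.sub_mulVec,
        Matrix.smul_mulVec, Matrix.smul_mulVec, ← Matrix.mulVec_mulVec,
        hvv_u, Matrix.mulVec_smul, smul_smul]
      rw [show (r^3)⁻¹ * r^2 = r⁻¹ by field_simp]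
      exact sub_self _
    rw [hJTu, zero_add, smul_smul]
    rw [show (r^2)⁻¹ * r^2 = 1 by field_simp]
    rw [one_smul]
  set S : Matrix (Fin D) (Fin D) ℝ := Nᵀ * N with hS
  have hSx : S *ᵥ xv = (r^2)⁻¹ • xv := by
    rw [hS, ← Matrix.mulVec_mulVec, hNx, Matrix.mulVec_smul, hNTu]
  have hESE : Eᵀ * S * E = Eᵀ * Jᵀ * J * E := by
    have e1 : Eᵀ * S * E = (N * E)ᵀ * (N * E) := by
      rw [Matrix.transpose_mul, hS]; simp only [Matrix.mul_assoc]
    have e2 : Eᵀ * Jᵀ * J * E = (J * E)ᵀ * (J * E) := by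
      rw [Matrix.transpose_mul]; simp only [Matrix.mul_assoc]
    rw [e1, e2, hNE]
  have hSsymm : Sᵀ = S := by rw [hS, Matrix.transpose_mul, Matrix.transpose_transpose]
  -- block matrix
  set c : Matrix (Fin D) (Fin 1) ℝ := replicateCol (Fin 1) xv with hc
  set Fm : Matrix (Fin D) (Fin (D-1) ⊕ Fin 1) ℝ := fromCols E c with hFm
  have hrc : replicateRow (Fin 1) xv * c = 1 := by
    ext i j
    simp only [hc, Matrix.mul_apply, Matrix.one_apply, Subsingleton.elim i j, if_true,
      Matrix.replicateRow_apply, Matrix.replicateCol_apply]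
    simpa [dotProduct] using hxv
  have hFtF : Fmᵀ * Fm = 1 := by
    rw [hFm, transpose_fromCols, fromRows_mul_fromCols, hE, transpose_replicateCol, hrowE,
      hc, hcolE, hrc, ← Matrix.fromBlocks_one]
  have hSc : S * c = (r^2)⁻¹ • c := by rw [hc, ← replicateCol_mulVec, hSx, replicateCol_smul]
  have hEStc : Eᵀ * (S * c) = 0 := by rw [hSc, Matrix.mul_smul, hcolE, smul_zero]
  have hb21 : replicateRow (Fin 1) xv * (S * E) = 0 := by
    have h0 : (S * E)ᵀ * c = 0 := by
      rw [Matrix.transpose_mul, hSsymm, Matrix.mul_assoc, hEStc]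
    have h' := congrArg Matrix.transpose h0
    rw [Matrix.transpose_mul, Matrix.transpose_transpose, hc, transpose_replicateCol,
      Matrix.transpose_zero] at h'
    exact h'
  have hFSF : Fmᵀ * (S * Fm) = fromBlocks (Eᵀ * S * E) 0 0 ((r^2)⁻¹ • (1 : Matrix (Fin 1) (Fin 1) ℝ)) := by
    rw [hFm, mul_fromCols, transpose_fromCols, fromRows_mul_fromCols,
      transpose_replicateCol, hEStc, hb21, hSc, Matrix.mul_smul, hrc, ← Matrix.mul_assoc]
  have hdetblock : (Fmᵀ * (S * Fm)).det = (Eᵀ * S * E).det * (r^2)⁻¹ := by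
    rw [hFSF, det_fromBlocks_zero₂₁, det_smul, det_one, Fintype.card_fin, pow_one, mul_one]
  -- reindexing
  have hD1 : D - 1 + 1 = D := by omega
  let e : Fin (D-1) ⊕ Fin 1 ≃ Fin D := finSumFinEquiv.trans (finCongr hD1)
  set F' : Matrix (Fin D) (Fin D) ℝ := Fm.submatrix id e.symm with hF'
  have hsub1 : F'ᵀ * F' = (Fmᵀ * Fm).submatrix e.symm e.symm := by
    rw [hF', transpose_submatrix]
    simpa using submatrix_mul_equiv Fmᵀ Fm e.symm (Equiv.refl (Fin D)) e.symm
  have hdetF' : F'.det * F'.det = 1 := by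
    have h := congrArg Matrix.det hsub1
    rw [hFtF, Matrix.det_mul, Matrix.det_transpose, submatrix_one_equiv e.symm, det_one] at h
    exact h
  have hsub2 : F'ᵀ * (S * F') = (Fmᵀ * (S * Fm)).submatrix e.symm e.symm := by
    have hm : S * F' = (S * Fm).submatrix id e.symm := by
      rw [hF']
      simpa using submatrix_mul_equiv S Fm id (Equiv.refl (Fin D)) e.symm
    rw [hm, hF', transpose_submatrix]
    simpa using submatrix_mul_equiv Fmᵀ (S * Fm) e.symm (Equiv.refl (Fin D)) e.symm
  have hdetS_eq : (Fmᵀ * (S * Fm)).det = S.det := by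
    have h := congrArg Matrix.det hsub2
    rw [Matrix.det_submatrix_equiv_self e.symm] at h
    rw [← h, Matrix.det_mul, Matrix.det_mul, Matrix.det_transpose]
    calc F'.det * (S.det * F'.det) = S.det * (F'.det * F'.det) := by ring
    _ = S.det := by rw [hdetF', mul_one]
  have hdetN' : S.det = H.det ^ 2 * (r ^ (2*(D+1)))⁻¹ := by
    rw [hS, Matrix.det_mul, Matrix.det_transpose, hdetN]
    rw [show 2*(D+1) = (D+1)*2 by ring, pow_mul, ← inv_pow]
    ring
  -- assemble
  have key : (Eᵀ * S * E).det * (r^2)⁻¹ = H.det ^ 2 * (r ^ (2*(D+1)))⁻¹ := by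
    rw [← hdetblock, hdetS_eq, hdetN']
  rw [← hESE]
  have hr2 : (r:ℝ)^2 ≠ 0 := pow_ne_zero _ hrn
  have : (Eᵀ * S * E).det = H.det ^ 2 * (r ^ (2*(D+1)))⁻¹ * r^2 := by
    field_simp at key ⊢
    linarith [key]
  rw [this, show 2*(D+1) = 2*D + 2 by ring, pow_add]
  field_simp

/-- for an invertible matrix `H` and `x ∈ S^{D-1}`, the Jacobian `J(x)` of
`Ψ(x) = Hx/‖Hx‖` satisfies, for every matrix `E` whose columns form an orthonormal basis
of the tangent space at `x`: `√(det(Eᵀ J(x)ᵀ J(x) E)) = |det H| · ‖H x‖^{−D}`. -/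
theorem linProj_density_update (D : ℕ) (hD : 2 ≤ D) (H : Matrix (Fin D) (Fin D) ℝ)
    (hH : IsUnit H.det) (x : EuclideanSpace ℝ (Fin D)) (hx : ‖x‖ = 1)
    (E : Matrix (Fin D) (Fin (D - 1)) ℝ)
    (hE : Eᵀ * E = 1)
    (hEx : Eᵀ.mulVec (fun i => x i) = 0) :
    Real.sqrt
        ((Eᵀ * (jacobianMatrix D (linProj H) x)ᵀ * jacobianMatrix D (linProj H) x *
          E).det) =
      |H.det| /
        ‖(WithLp.equiv 2 (Fin D → ℝ)).symm
          (H.mulVec (WithLp.equiv 2 (Fin D → ℝ) x))‖ ^ D := by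
  set xv : Fin D → ℝ := WithLp.equiv 2 (Fin D → ℝ) x with hxv'
  have hxveq : (fun i => x i) = xv := rfl
  set u : Fin D → ℝ := H.mulVec xv with hu'
  set y : EuclideanSpace ℝ (Fin D) := (WithLp.equiv 2 (Fin D → ℝ)).symm u with hy'
  set r : ℝ := ‖y‖ with hr'
  -- x ≠ 0 and u ≠ 0
  have hx0 : x ≠ 0 := by
    intro h; rw [h, norm_zero] at hx; exact one_ne_zero hx.symm
  have hxv0 : xv ≠ 0 := by
    intro h
    apply hx0
    ext i
    have := congrFun h i
    exact this
  have hu0 : u ≠ 0 := by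
    intro h
    apply hxv0
    have : H⁻¹ *ᵥ (H *ᵥ xv) = xv := by
      rw [Matrix.mulVec_mulVec, Matrix.nonsing_inv_mul H hH, Matrix.one_mulVec]
    rw [← this, ← hu', h, Matrix.mulVec_zero]
  have hy0 : y ≠ 0 := by
    intro h
    apply hu0
    have : ∀ i, u i = 0 := fun i => by
      have := congrFun (congrArg (WithLp.equiv 2 (Fin D → ℝ)) h) i
      exact this
    funext i; exact this i
  have hr : 0 < r := norm_pos_iff.mpr hy0
  -- dot products
  have hdotx : xv ⬝ᵥ xv = 1 := by
    have h1 : (inner ℝ x x : ℝ) = ‖x‖ ^ 2 := real_inner_self_eq_norm_sq x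
    rw [hx, one_pow] at h1
    rw [← h1, PiLp.inner_apply]
    simp only [dotProduct, RCLike.inner_apply, conj_trivial]
    rfl
  have hdotu : u ⬝ᵥ u = r ^ 2 := by
    have h1 : (inner ℝ y y : ℝ) = ‖y‖ ^ 2 := real_inner_self_eq_norm_sq y
    rw [← hr'] at h1
    rw [← h1, PiLp.inner_apply]
    simp [hy', dotProduct, RCLike.inner_apply, sq]
  -- Jacobian
  have hJ : jacobianMatrix D (linProj H) x =
      r⁻¹ • H - (r^3)⁻¹ • (vecMulVec u u * H) := by
    apply jacobianMatrix_linProj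
    rw [Matrix.toEuclideanLin_apply]
    exact hy0
  rw [hJ, hxveq] at *
  rw [det_core D hD H hH xv hdotx E hE hEx r hr hdotu]
  have habs : H.det ^ 2 / r ^ (2 * D) = (|H.det| / r ^ D) ^ 2 := by
    rw [div_pow, sq_abs, ← pow_mul, mul_comm D 2]
  rw [habs, Real.sqrt_sq (by positivity)]
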